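/- Let μ be a Borel probability measure on [0,1] with μ ≠ δ_{2/3}. Then for every x ∈ Δ², for μ^ℕ-almost every ω ∈ Ω there exists a point p ∈ 𝒜 such that φ_n(x,ω) converges to p as n → ∞. (Almost sure convergence of every trajectory of the random dynamical system to one of the seven fixed points; Theorem 2.1.) -/

import Mathlib

open MeasureTheory ProbabilityTheory Filter Topology
open scoped ENNReal

noncomputable section

/-- The cubic stochastic operator `V_θ`, regarded as a map on (Euclidean) `ℝ³`. -/
def Vcso (θ : ℝ) (x : EuclideanSpace ℝ (Fin 3)) : EuclideanSpace ℝ (Fin 3) :=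
  WithLp.toLp 2 ![x 0 * ((x 0)^2 + 3*θ*(x 0)*(x 1 + x 2) + 3*(1-θ)*((x 1)^2 + (x 2)^2) + 2*(x 1)*(x 2)),
    x 1 * ((x 1)^2 + 3*θ*(x 1)*(x 2 + x 0) + 3*(1-θ)*((x 2)^2 + (x 0)^2) + 2*(x 2)*(x 0)),
    x 2 * ((x 2)^2 + 3*θ*(x 2)*(x 0 + x 1) + 3*(1-θ)*((x 0)^2 + (x 1)^2) + 2*(x 0)*(x 1))]

/-- The simplex `Δ² = {x ∈ ℝ³ : x₁,x₂,x₃ ≥ 0, x₁+x₂+x₃ = 1}`. -/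
def simplex2 : Set (EuclideanSpace ℝ (Fin 3)) :=
  {x | 0 ≤ x 0 ∧ 0 ≤ x 1 ∧ 0 ≤ x 2 ∧ x 0 + x 1 + x 2 = 1}

/-- The random orbit `φ_n(x) = V_{θ_n} ∘ ⋯ ∘ V_{θ_1}(x)` driven by the sequence
`θ_1, θ_2, … = θs 0, θs 1, …`. -/
def phiRDS (θs : ℕ → ℝ) : ℕ → EuclideanSpace ℝ (Fin 3) → EuclideanSpace ℝ (Fin 3)
  | 0, x => x
  | n+1, x => Vcso (θs n) (phiRDS θs n x)

/-- The vertex `e₁ = (1,0,0)`. -/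
def e1 : EuclideanSpace ℝ (Fin 3) := WithLp.toLp 2 ![1, 0, 0]

/-- The vertex `c = (1/2,1/2,0)`. -/
def cpt : EuclideanSpace ℝ (Fin 3) := WithLp.toLp 2 ![1/2, 1/2, 0]

/-- The vertex `C = (1/3,1/3,1/3)`. -/
def Cpt : EuclideanSpace ℝ (Fin 3) := WithLp.toLp 2 ![1/3, 1/3, 1/3]

/-- `G₁ = {y ∈ Δ² : y₁ ≥ y₂ ≥ y₃}`. -/
def G1 : Set (EuclideanSpace ℝ (Fin 3)) :=
  {y ∈ simplex2 | y 0 ≥ y 1 ∧ y 1 ≥ y 2}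

/-- The interior of `G₁`: `{y ∈ Δ² : y₁ > y₂ > y₃ > 0}`. -/
def intG1 : Set (EuclideanSpace ℝ (Fin 3)) :=
  {y ∈ simplex2 | y 0 > y 1 ∧ y 1 > y 2 ∧ y 2 > 0}

/-- The edge `M₁₂ = {y ∈ Δ² : y₁ = y₂ ≥ y₃}`. -/
def M12 : Set (EuclideanSpace ℝ (Fin 3)) :=
  {y ∈ simplex2 | y 0 = y 1 ∧ y 1 ≥ y 2}

/-- The edge `M₂₃ = {y ∈ Δ² : y₁ ≥ y₂ = y₃}`. -/
def M23 : Set (EuclideanSpace ℝ (Fin 3)) :=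
  {y ∈ simplex2 | y 0 ≥ y 1 ∧ y 1 = y 2}

/-- The edge `Γ₁₂ = {y ∈ Δ² : y₁ ≥ y₂, y₃ = 0}`. -/
def Gamma12 : Set (EuclideanSpace ℝ (Fin 3)) :=
  {y ∈ simplex2 | y 0 ≥ y 1 ∧ y 2 = 0}

/-- The seven fixed points `𝒜`. -/
def fixedA : Set (EuclideanSpace ℝ (Fin 3)) :=
  {WithLp.toLp 2 ![1,0,0], WithLp.toLp 2 ![0,1,0], WithLp.toLp 2 ![0,0,1], WithLp.toLp 2 ![1/2,1/2,0],
    WithLp.toLp 2 ![1/2,0,1/2], WithLp.toLp 2 ![0,1/2,1/2], WithLp.toLp 2 ![1/3,1/3,1/3]}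

/-- Positive part of `log t`, valued in `ℝ≥0∞`. -/
def logPos (t : ℝ) : ℝ≥0∞ := ENNReal.ofReal (Real.log t)

/-- Negative part of the extended logarithm (with `log 0 = -∞`), valued in `ℝ≥0∞`. -/
def logNeg (t : ℝ) : ℝ≥0∞ := if t ≤ 0 then ⊤ else ENNReal.ofReal (-Real.log t)

/-- `E log g(Θ) < 0` in the extended sense (the value `-∞` is allowed), where `Θ` has law `μ`:
the positive part of the extended expectation is strictly smaller than the negative part. -/
def expLogNeg (μ : Measure ℝ) (g : ℝ → ℝ) : Prop :=
  ∫⁻ θ, logPos (g θ) ∂μ < ∫⁻ θ, logNeg (g θ) ∂μ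

/-- `E log g(Θ) ≤ r` in the extended sense (the value `-∞` is allowed), where `Θ` has law `μ`. -/
def expLogLe (μ : Measure ℝ) (g : ℝ → ℝ) (r : ℝ) : Prop :=
  ∫⁻ θ, logPos (g θ) ∂μ + ENNReal.ofReal (-r) ≤ ∫⁻ θ, logNeg (g θ) ∂μ + ENNReal.ofReal r

/-- The topological support of a measure on `ℝ`: points all of whose open neighborhoods
have positive measure. -/
def measSupport (μ : Measure ℝ) : Set ℝ :=
  {t : ℝ | ∀ U : Set ℝ, IsOpen U → t ∈ U → 0 < μ U}

/-!
On the simplex, `V_θ(y)ᵢ = yᵢ + (3θ - 2) yᵢ (yᵢ - ‖y‖²)`, and `V_θ` preserves the order of the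
coordinates. Along a trajectory the largest coordinate therefore has drift `yᵢ (yᵢ - ‖y‖²) ≥ 0`
and the smallest one drift `≤ 0`; as `E(3Θ - 2)` has a fixed sign, both are bounded sub- or
supermartingales and converge almost surely, and with them the whole trajectory. Since
`μ ≠ δ_{2/3}`, the second Borel–Cantelli lemma gives `|3Θₙ - 2| ≥ δ` infinitely often, so the
increments, which tend to `0`, force `pᵢ (pᵢ - ‖p‖²) = 0` at the limit `p`; the zeros of this
field in the simplex are exactly the seven points of `𝒜`.
-/

lemma exists_measure_le_dist_ne_zero_of_ne_dirac {α : Type*} [MetricSpace α] [MeasurableSpace α]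
    {μ : Measure α} [IsProbabilityMeasure μ] {a : α} (hμ : μ ≠ Measure.dirac a) :
    ∃ δ > 0, μ {t | δ ≤ dist t a} ≠ 0 := by
  by_contra! h
  have hsmall : ∀ᵐ t ∂μ, ∀ k : ℕ, dist t a < 1 / (k + 1) := ae_all_iff.2 fun k => by
    simpa [ae_iff] using h (1 / (k + 1)) Nat.one_div_pos_of_nat
  have hae : (fun t => t) =ᵐ[μ] fun _ => a := by
    filter_upwards [hsmall] with t ht
    refine eq_of_forall_dist_le fun ε hε => ?_
    obtain ⟨k, hk⟩ := exists_nat_one_div_lt hε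
    exact ((ht k).trans hk).le
  apply hμ
  calc μ = μ.map (fun t => t) := Measure.map_id.symm
    _ = μ.map (fun _ => a) := Measure.map_congr hae
    _ = Measure.dirac a := by rw [Measure.map_const, measure_univ, one_smul]

lemma exists_ne_forall_le_forall_ge {ι α : Type*} [Fintype ι] [Nontrivial ι] [LinearOrder α]
    (x : ι → α) : ∃ i k, i ≠ k ∧ (∀ j, x j ≤ x i) ∧ ∀ j, x k ≤ x j := by
  classical
  obtain ⟨i, hi⟩ := Finite.exists_max x
  obtain ⟨j₀, hj₀⟩ := exists_ne i
  obtain ⟨k, hk, hkmin⟩ := (Finset.univ.erase i).exists_min_image x ⟨j₀, by simpa using hj₀⟩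
  refine ⟨i, k, (Finset.ne_of_mem_erase hk).symm, hi, fun j => ?_⟩
  obtain rfl | hj := eq_or_ne j i
  · exact hi k
  · exact hkmin j (by simpa using hj)

lemma eq_zero_of_tendsto_of_frequently_le_abs {w u c : ℕ → ℝ} {M L δ : ℝ} (hδ : 0 < δ)
    (hw : Tendsto w atTop (𝓝 M)) (hu : Tendsto u atTop (𝓝 L))
    (hstep : ∀ n, w (n + 1) - w n = u n * c n) (hc : ∃ᶠ n in atTop, δ ≤ |c n|) : L = 0 := by
  have hinc : Tendsto (fun n => |w (n + 1) - w n|) atTop (𝓝 0) := by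
    simpa using ((hw.comp (tendsto_add_atTop_nat 1)).sub hw).abs
  have hle : ∃ᶠ n in atTop, |u n| * δ ≤ |w (n + 1) - w n| := hc.mono fun n hn => by
    rw [hstep, abs_mul]; exact mul_le_mul_of_nonneg_left hn (abs_nonneg _)
  have : |L| * δ ≤ 0 := le_of_tendsto_of_tendsto_of_frequently (hu.abs.mul_const δ) hinc hle
  exact abs_eq_zero.1 (le_antisymm (nonpos_of_mul_nonpos_left this hδ) (abs_nonneg L))

section StochasticVector

variable {ι : Type*} [Fintype ι] {y : ι → ℝ}

lemma sum_sq_le_of_forall_le (hnn : ∀ j, 0 ≤ y j) (hsum : ∑ j, y j = 1) {i : ι}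
    (hi : ∀ j, y j ≤ y i) : ∑ j, y j ^ 2 ≤ y i :=
  calc ∑ j, y j ^ 2 = ∑ j, y j * y j := by simp only [sq]
    _ ≤ ∑ j, y j * y i := Finset.sum_le_sum fun j _ => mul_le_mul_of_nonneg_left (hi j) (hnn j)
    _ = y i := by rw [← Finset.sum_mul, hsum, one_mul]

lemma le_sum_sq_of_forall_ge (hnn : ∀ j, 0 ≤ y j) (hsum : ∑ j, y j = 1) {i : ι}
    (hi : ∀ j, y i ≤ y j) : y i ≤ ∑ j, y j ^ 2 :=
  calc y i = ∑ j, y j * y i := by rw [← Finset.sum_mul, hsum, one_mul]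
    _ ≤ ∑ j, y j * y j := Finset.sum_le_sum fun j _ => mul_le_mul_of_nonneg_left (hi j) (hnn j)
    _ = ∑ j, y j ^ 2 := by simp only [sq]

lemma le_one_of_sum_eq_one (hnn : ∀ j, 0 ≤ y j) (hsum : ∑ j, y j = 1) (i : ι) : y i ≤ 1 :=
  hsum ▸ Finset.single_le_sum (fun k _ => hnn k) (Finset.mem_univ i)

lemma sum_sq_le_one (hnn : ∀ j, 0 ≤ y j) (hsum : ∑ j, y j = 1) : ∑ j, y j ^ 2 ≤ 1 :=
  calc ∑ j, y j ^ 2 ≤ ∑ j, y j := Finset.sum_le_sum fun j _ => by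
        nlinarith [hnn j, le_one_of_sum_eq_one hnn hsum j]
    _ = 1 := hsum

end StochasticVector

lemma mem_simplex2_iff {y : EuclideanSpace ℝ (Fin 3)} :
    y ∈ simplex2 ↔ (∀ i, 0 ≤ y i) ∧ ∑ i, y i = 1 := by
  simp [simplex2, Fin.forall_fin_succ, Fin.sum_univ_three, and_assoc]

def cubicDrift (y : EuclideanSpace ℝ (Fin 3)) (i : Fin 3) : ℝ := y i * (y i - ∑ j, y j ^ 2)

section Simplex

variable {y : EuclideanSpace ℝ (Fin 3)} {θ : ℝ}

lemma cubicDrift_nonneg (hy : y ∈ simplex2) {i : Fin 3} (hi : ∀ j, y j ≤ y i) :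
    0 ≤ cubicDrift y i := by
  obtain ⟨hnn, hsum⟩ := mem_simplex2_iff.1 hy
  exact mul_nonneg (hnn i) (sub_nonneg.2 (sum_sq_le_of_forall_le hnn hsum hi))

lemma cubicDrift_nonpos (hy : y ∈ simplex2) {i : Fin 3} (hi : ∀ j, y i ≤ y j) :
    cubicDrift y i ≤ 0 := by
  obtain ⟨hnn, hsum⟩ := mem_simplex2_iff.1 hy
  exact mul_nonpos_of_nonneg_of_nonpos (hnn i) (sub_nonpos.2 (le_sum_sq_of_forall_ge hnn hsum hi))

lemma sum_cubicDrift (hy : y ∈ simplex2) : ∑ i, cubicDrift y i = 0 := by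
  simp only [cubicDrift, mul_sub, Finset.sum_sub_distrib, ← Finset.sum_mul,
    (mem_simplex2_iff.1 hy).2, sq, one_mul, sub_self]

lemma Vcso_apply (θ : ℝ) (hy : y ∈ simplex2) (i : Fin 3) :
    Vcso θ y i = y i + cubicDrift y i * (3 * θ - 2) := by
  have h2 : y 2 = 1 - y 0 - y 1 := by linarith [hy.2.2.2]
  fin_cases i <;> simp [Vcso, cubicDrift, Fin.sum_univ_three, h2] <;> ring

lemma Vcso_mem_simplex2 (hθ : θ ∈ Set.Icc 0 1) (hy : y ∈ simplex2) : Vcso θ y ∈ simplex2 := by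
  obtain ⟨hθ0, hθ1⟩ := hθ
  have h1θ : 0 ≤ 1 - θ := sub_nonneg.2 hθ1
  obtain ⟨hnn, hsum⟩ := mem_simplex2_iff.1 hy
  refine mem_simplex2_iff.2 ⟨fun i => ?_, ?_⟩
  · have := hnn 0; have := hnn 1; have := hnn 2
    fin_cases i <;> simp [Vcso] <;> positivity
  · simp only [Vcso_apply θ hy, Finset.sum_add_distrib, ← Finset.sum_mul, hsum,
      sum_cubicDrift hy, zero_mul, add_zero]

lemma Vcso_apply_le_apply (hθ : θ ∈ Set.Icc 0 1) (hy : y ∈ simplex2) {i j : Fin 3}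
    (hji : y j ≤ y i) : Vcso θ y j ≤ Vcso θ y i := by
  obtain rfl | hij := eq_or_ne i j
  · rfl
  obtain ⟨hnn, hsum⟩ := mem_simplex2_iff.1 hy
  set S := ∑ k, y k ^ 2
  have hS : S ≤ 1 := sum_sq_le_one hnn hsum
  have hij2 : y i ^ 2 + y j ^ 2 ≤ S :=
    Finset.add_le_sum (fun k _ => sq_nonneg (y k)) (Finset.mem_univ i) (Finset.mem_univ j) hij
  -- `1 + t u ≥ 0` on the box `t = 3θ - 2 ∈ [-2, 1]`, `u = y i + y j - S ∈ [-1, 1/2]`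
  have hfactor : 0 ≤ 1 + (3 * θ - 2) * (y i + y j - S) := by
    linarith [mul_nonneg (by linarith [hθ.1] : 0 ≤ 3 * θ) (by nlinarith [hnn i, hnn j] :
      0 ≤ y i + y j - S + 1), mul_nonneg (by linarith [hθ.2] : 0 ≤ 3 - 3 * θ)
      (by nlinarith [sq_nonneg (y i - 1/2), sq_nonneg (y j - 1/2)] : 0 ≤ 1/2 - (y i + y j - S))]
  have hdiff : Vcso θ y i - Vcso θ y j = (y i - y j) * (1 + (3 * θ - 2) * (y i + y j - S)) := by
    rw [Vcso_apply θ hy, Vcso_apply θ hy]; unfold cubicDrift; ring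
  exact sub_nonneg.1 (hdiff ▸ mul_nonneg (sub_nonneg.2 hji) hfactor)

lemma mem_fixedA_of_cubicDrift_eq_zero (hy : y ∈ simplex2) (h : ∀ i, cubicDrift y i = 0) :
    y ∈ fixedA := by
  obtain ⟨a, b, c, rfl⟩ : ∃ a b c : ℝ, y = !₂[a, b, c] :=
    ⟨y 0, y 1, y 2, by ext i; fin_cases i <;> rfl⟩
  have hs : a + b + c = 1 := hy.2.2.2
  have hval : ∀ i, ![a, b, c] i = 0 ∨ ![a, b, c] i = a ^ 2 + b ^ 2 + c ^ 2 := fun i => by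
    simpa [cubicDrift, Fin.sum_univ_three, sub_eq_zero] using h i
  generalize a ^ 2 + b ^ 2 + c ^ 2 = S at hval
  rcases hval 0 with h0 | h0 <;> rcases hval 1 with h1 | h1 <;> rcases hval 2 with h2 | h2 <;>
    simp only [Matrix.cons_val] at h0 h1 h2 <;> subst a b c <;> simp [fixedA] <;> grind

lemma continuous_Vcso : Continuous fun p : ℝ × EuclideanSpace ℝ (Fin 3) => Vcso p.1 p.2 := by
  unfold Vcso; fun_prop

lemma continuous_cubicDrift (i : Fin 3) :
    Continuous fun y : EuclideanSpace ℝ (Fin 3) => cubicDrift y i := by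
  unfold cubicDrift; fun_prop

lemma isClosed_simplex2 : IsClosed simplex2 := by
  simp only [simplex2, Set.ofPred_and]
  refine (isClosed_le ?_ ?_).inter ((isClosed_le ?_ ?_).inter ((isClosed_le ?_ ?_).inter
    (isClosed_eq ?_ ?_))) <;> fun_prop

end Simplex

section Orbit

variable {θs : ℕ → ℝ} {x : EuclideanSpace ℝ (Fin 3)}

lemma phiRDS_mem_simplex2 (hθ : ∀ n, θs n ∈ Set.Icc 0 1) (hx : x ∈ simplex2) (n : ℕ) :
    phiRDS θs n x ∈ simplex2 := by
  induction n with
  | zero => exact hx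
  | succ n ih => exact Vcso_mem_simplex2 (hθ n) ih

lemma phiRDS_apply_le_apply (hθ : ∀ n, θs n ∈ Set.Icc 0 1) (hx : x ∈ simplex2) {i j : Fin 3}
    (hji : x j ≤ x i) (n : ℕ) : phiRDS θs n x j ≤ phiRDS θs n x i := by
  induction n with
  | zero => exact hji
  | succ n ih => exact Vcso_apply_le_apply (hθ n) (phiRDS_mem_simplex2 hθ hx n) ih

lemma phiRDS_succ_apply (hθ : ∀ n, θs n ∈ Set.Icc 0 1) (hx : x ∈ simplex2) (n : ℕ) (i : Fin 3) :
    phiRDS θs (n + 1) x i =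
      phiRDS θs n x i + cubicDrift (phiRDS θs n x) i * (3 * θs n - 2) :=
  Vcso_apply _ (phiRDS_mem_simplex2 hθ hx n) i

lemma mem_fixedA_of_tendsto_phiRDS (hθ : ∀ n, θs n ∈ Set.Icc 0 1) (hx : x ∈ simplex2) {δ : ℝ}
    (hδ : 0 < δ) (hfreq : ∃ᶠ n in atTop, δ ≤ |3 * θs n - 2|) {p : EuclideanSpace ℝ (Fin 3)}
    (hp : Tendsto (fun n => phiRDS θs n x) atTop (𝓝 p)) : p ∈ fixedA := by
  refine mem_fixedA_of_cubicDrift_eq_zero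
    (isClosed_simplex2.mem_of_tendsto hp (.of_forall (phiRDS_mem_simplex2 hθ hx))) fun i => ?_
  have hcoord : Continuous fun y : EuclideanSpace ℝ (Fin 3) => y i := by fun_prop
  refine eq_zero_of_tendsto_of_frequently_le_abs hδ ((hcoord.tendsto p).comp hp)
    (((continuous_cubicDrift i).tendsto p).comp hp) (fun n => ?_) hfreq
  simp only [Function.comp_apply, phiRDS_succ_apply hθ hx]; ring

lemma exists_tendsto_of_tendsto_apply_of_ne {y : ℕ → EuclideanSpace ℝ (Fin 3)}
    (hy : ∀ n, y n ∈ simplex2) {i k : Fin 3} (hik : i ≠ k) {a b : ℝ}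
    (ha : Tendsto (fun n => y n i) atTop (𝓝 a)) (hb : Tendsto (fun n => y n k) atTop (𝓝 b)) :
    ∃ p, Tendsto y atTop (𝓝 p) := by
  have hrest : ∀ j, j ≠ i → j ≠ k → ∀ z ∈ simplex2, z j = 1 - z i - z k := by
    intro j hji hjk z hz
    obtain ⟨-, -, -, hs⟩ := hz
    fin_cases i <;> fin_cases k <;> fin_cases j <;> simp_all <;> linarith
  have hcoord : ∀ j, ∃ c, Tendsto (fun n => y n j) atTop (𝓝 c) := fun j => by
    by_cases hji : j = i
    · exact ⟨a, hji ▸ ha⟩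
    by_cases hjk : j = k
    · exact ⟨b, hjk ▸ hb⟩
    refine ⟨1 - a - b, ?_⟩
    simp only [hrest j hji hjk _ (hy _)]
    exact (tendsto_const_nhds.sub ha).sub hb
  choose c hc using hcoord
  exact ⟨WithLp.toLp 2 c, ((PiLp.continuous_toLp 2 _).tendsto c).comp (tendsto_pi_nhds.2 hc)⟩

end Orbit

section Probability

variable {Ω : Type*} {m0 : MeasurableSpace Ω} {P : Measure Ω} [IsProbabilityMeasure P]

lemma condExp_mul_ae_eq_of_indep {m : MeasurableSpace Ω} (hm : m ≤ m0) {K ξ : Ω → ℝ}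
    (hK : StronglyMeasurable[m] K) (hξ : Measurable[m0] ξ) (hKξ : Integrable (K * ξ) P)
    (hξint : Integrable ξ P) (hindep : Indep (MeasurableSpace.comap ξ inferInstance) m P) :
    P[K * ξ | m] =ᵐ[P] fun ω => K ω * P[ξ] := by
  filter_upwards [condExp_mul_of_stronglyMeasurable_left hK hKξ hξint,
    condExp_indep_eq hξ.comap_le hm (comap_measurable ξ).stronglyMeasurable hindep] with ω h1 h2
  rw [h1, Pi.mul_apply, h2]

lemma ae_exists_tendsto_of_increment_indep_of_mul_nonneg {ℱ : Filtration ℕ m0}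
    {s K ξ : ℕ → Ω → ℝ} {C e : ℝ}
    (hs : StronglyAdapted ℱ s) (hsb : ∀ n ω, |s n ω| ≤ C) (hK : StronglyAdapted ℱ K)
    (hξ : ∀ n, Measurable (ξ n)) (hξint : ∀ n, Integrable (ξ n) P)
    (hindep : ∀ n, Indep (MeasurableSpace.comap (ξ n) inferInstance) (ℱ n) P)
    (hmean : ∀ n, P[ξ n] = e) (hstep : ∀ n, s (n + 1) = s n + K n * ξ n)
    (hsign : ∀ n ω, 0 ≤ K n ω * e) :
    ∀ᵐ ω ∂P, ∃ c, Tendsto (fun n => s n ω) atTop (𝓝 c) := by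
  have hint : ∀ n, Integrable (s n) P := fun n =>
    Integrable.of_mem_Icc (-C) C ((hs n).mono (ℱ.le n)).measurable.aemeasurable
      (ae_of_all _ fun ω => abs_le.1 (hsb n ω))
  have hinc : ∀ n, s (n + 1) - s n = K n * ξ n := fun n => by rw [hstep, add_sub_cancel_left]
  have hsub : Submartingale s ℱ P := submartingale_of_condExp_sub_nonneg_nat hs hint fun n => by
    have hKξ : Integrable (K n * ξ n) P := hinc n ▸ (hint (n + 1)).sub (hint n)
    filter_upwards [condExp_mul_ae_eq_of_indep (ℱ.le n) (hK n) (hξ n) hKξ (hξint n) (hindep n)]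
      with ω hω
    rw [hinc, Pi.zero_apply, hω, hmean]
    exact hsign n ω
  refine hsub.exists_ae_tendsto_of_bdd (R := C.toNNReal) fun n => ?_
  simpa [ENNReal.ofReal] using eLpNorm_le_of_ae_bound (p := 1) (μ := P)
    (ae_of_all _ fun ω => (Real.norm_eq_abs (s n ω)).trans_le (hsb n ω))

lemma ae_exists_tendsto_of_increment_indep {ℱ : Filtration ℕ m0} {s K ξ : ℕ → Ω → ℝ} {C e : ℝ}
    (hs : StronglyAdapted ℱ s) (hsb : ∀ n ω, |s n ω| ≤ C)
    (hK : StronglyAdapted ℱ K) (hKsign : (∀ n ω, 0 ≤ K n ω) ∨ ∀ n ω, K n ω ≤ 0)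
    (hξ : ∀ n, Measurable (ξ n)) (hξint : ∀ n, Integrable (ξ n) P)
    (hindep : ∀ n, Indep (MeasurableSpace.comap (ξ n) inferInstance) (ℱ n) P)
    (hmean : ∀ n, P[ξ n] = e) (hstep : ∀ n, s (n + 1) = s n + K n * ξ n) :
    ∀ᵐ ω ∂P, ∃ c, Tendsto (fun n => s n ω) atTop (𝓝 c) := by
  have hsign : (∀ n ω, 0 ≤ K n ω * e) ∨ ∀ n ω, 0 ≤ -K n ω * e := by
    rcases hKsign with hK0 | hK0 <;> rcases le_total 0 e with he | he
    · exact .inl fun n ω => mul_nonneg (hK0 n ω) he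
    · exact .inr fun n ω => mul_nonneg_of_nonpos_of_nonpos (neg_nonpos.2 (hK0 n ω)) he
    · exact .inr fun n ω => mul_nonneg (neg_nonneg.2 (hK0 n ω)) he
    · exact .inl fun n ω => mul_nonneg_of_nonpos_of_nonpos (hK0 n ω) he
  rcases hsign with hsign | hsign
  · exact ae_exists_tendsto_of_increment_indep_of_mul_nonneg hs hsb hK hξ hξint hindep hmean hstep
      hsign
  · have hneg := ae_exists_tendsto_of_increment_indep_of_mul_nonneg (s := -s) (K := -K) hs.neg
      (fun n ω => by simpa using hsb n ω) hK.neg hξ hξint hindep hmean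
      (fun n => by rw [Pi.neg_apply, hstep, neg_add, Pi.neg_apply, Pi.neg_apply, neg_mul]) hsign
    filter_upwards [hneg] with ω ⟨c, hc⟩
    exact ⟨-c, by simpa using hc.neg⟩

lemma ae_frequently_mem_of_iIndepFun {β : Type*} [MeasurableSpace β] {Θ : ℕ → Ω → β}
    (hΘ : ∀ n, Measurable (Θ n)) (hindep : iIndepFun Θ P) {ν : Measure β}
    (hlaw : ∀ n, P.map (Θ n) = ν) {S : Set β} (hS : MeasurableSet S) (hνS : ν S ≠ 0) :
    ∀ᵐ ω ∂P, ∃ᶠ n in atTop, Θ n ω ∈ S := by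
  have hmeas : ∀ n, MeasurableSet (Θ n ⁻¹' S) := fun n => hΘ n hS
  have hiis : iIndepSet (fun n => Θ n ⁻¹' S) P := (iIndepSet_iff_meas_biInter hmeas).2 fun s =>
    hindep.measure_inter_preimage_eq_mul (sets := fun _ => S) s fun _ _ => hS
  have hsum : ∑' n, P (Θ n ⁻¹' S) = ∞ := by
    simp only [← Measure.map_apply (hΘ _) hS, hlaw]
    exact ENNReal.tsum_const_eq_top_of_ne_zero hνS
  have hlimsup : ∀ᵐ ω ∂P, ω ∈ limsup (fun n => Θ n ⁻¹' S) atTop :=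
    (mem_ae_iff_prob_eq_one (.measurableSet_limsup hmeas)).2 (measure_limsup_eq_one hmeas hiis hsum)
  filter_upwards [hlimsup] with ω hω
  exact mem_limsup_iff_frequently_mem.1 hω

end Probability

section RandomOrbit

variable {Ω : Type*} [MeasurableSpace Ω] {P : Measure Ω} [IsProbabilityMeasure P]
  {Θ : ℕ → Ω → ℝ} {ν : Measure ℝ} {x : EuclideanSpace ℝ (Fin 3)}

lemma stronglyAdapted_phiRDS_succ (hΘ : ∀ n, StronglyMeasurable (Θ n))
    (x : EuclideanSpace ℝ (Fin 3)) :
    StronglyAdapted (Filtration.natural Θ hΘ) fun n ω => phiRDS (fun k => Θ k ω) (n + 1) x := by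
  intro n
  induction n with
  | zero =>
    exact continuous_Vcso.comp_stronglyMeasurable
      ((Filtration.stronglyAdapted_natural hΘ 0).prodMk stronglyMeasurable_const)
  | succ n ih =>
    exact continuous_Vcso.comp_stronglyMeasurable
      ((Filtration.stronglyAdapted_natural hΘ (n + 1)).prodMk
        (ih.mono ((Filtration.natural Θ hΘ).mono n.le_succ)))

lemma ae_exists_tendsto_phiRDS_apply (hΘ : ∀ n, Measurable (Θ n))
    (hΘI : ∀ n ω, Θ n ω ∈ Set.Icc 0 1) (hindep : iIndepFun Θ P) (hlaw : ∀ n, P.map (Θ n) = ν)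
    (hx : x ∈ simplex2) {i : Fin 3} (hi : (∀ j, x j ≤ x i) ∨ ∀ j, x i ≤ x j) :
    ∀ᵐ ω ∂P, ∃ c, Tendsto (fun n => phiRDS (fun k => Θ k ω) n x i) atTop (𝓝 c) := by
  have hΘsm : ∀ n, StronglyMeasurable (Θ n) := fun n => (hΘ n).stronglyMeasurable
  -- Shifted by one step so that `X n` is adapted to the natural filtration `σ(Θ 0, …, Θ n)`.
  set X : ℕ → Ω → EuclideanSpace ℝ (Fin 3) := fun n ω => phiRDS (fun k => Θ k ω) (n + 1) x
  set ξ : ℕ → Ω → ℝ := fun n ω => 3 * Θ (n + 1) ω - 2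
  have hX := stronglyAdapted_phiRDS_succ hΘsm x
  have hXs : ∀ n ω, X n ω ∈ simplex2 := fun n ω =>
    phiRDS_mem_simplex2 (fun k => hΘI k ω) hx (n + 1)
  have hcoord : Continuous fun y : EuclideanSpace ℝ (Fin 3) => y i := by fun_prop
  have hbound : ∀ n ω, |X n ω i| ≤ 1 := fun n ω => by
    obtain ⟨hnn, hsum⟩ := mem_simplex2_iff.1 (hXs n ω)
    exact abs_le.2 ⟨by linarith [hnn i], le_one_of_sum_eq_one hnn hsum i⟩
  have hsign : (∀ n ω, 0 ≤ cubicDrift (X n ω) i) ∨ ∀ n ω, cubicDrift (X n ω) i ≤ 0 := hi.imp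
    (fun h n ω => cubicDrift_nonneg (hXs n ω) fun j =>
      phiRDS_apply_le_apply (fun k => hΘI k ω) hx (h j) _)
    (fun h n ω => cubicDrift_nonpos (hXs n ω) fun j =>
      phiRDS_apply_le_apply (fun k => hΘI k ω) hx (h j) _)
  have hξ : ∀ n, Measurable (ξ n) := fun n => by fun_prop
  have hξint : ∀ n, Integrable (ξ n) P := fun n =>
    Integrable.of_mem_Icc (-2) 1 (hξ n).aemeasurable (ae_of_all _ fun ω =>
      ⟨by linarith [(hΘI (n + 1) ω).1], by linarith [(hΘI (n + 1) ω).2]⟩)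
  have hξindep : ∀ n, Indep (MeasurableSpace.comap (ξ n) inferInstance)
      (Filtration.natural Θ hΘsm n) P := fun n =>
    indep_of_indep_of_le_left (hindep.indep_comap_natural_of_lt hΘsm n.lt_succ_self)
      (((comap_measurable (Θ (n + 1))).const_mul 3).sub_const 2).comap_le
  have hmean : ∀ n, P[ξ n] = ∫ t, (3 * t - 2) ∂ν := fun n => by
    rw [← hlaw (n + 1), integral_map (hΘ _).aemeasurable (by fun_prop)]
  have hstep : ∀ n, (fun ω => X (n + 1) ω i) = (fun ω => X n ω i) +
      (fun ω => cubicDrift (X n ω) i) * ξ n := fun n =>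
    funext fun ω => phiRDS_succ_apply (fun k => hΘI k ω) hx (n + 1) i
  filter_upwards [ae_exists_tendsto_of_increment_indep (fun n => hcoord.comp_stronglyMeasurable
    (hX n)) hbound (fun n => (continuous_cubicDrift i).comp_stronglyMeasurable (hX n)) hsign hξ
    hξint hξindep hmean hstep] with ω ⟨c, hc⟩
  exact ⟨c, (tendsto_add_atTop_iff_nat 1).1 hc⟩

theorem ae_exists_mem_fixedA_tendsto_phiRDS (hΘ : ∀ n, Measurable (Θ n))
    (hΘI : ∀ n ω, Θ n ω ∈ Set.Icc 0 1) (hindep : iIndepFun Θ P) (hlaw : ∀ n, P.map (Θ n) = ν)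
    (hν : ν ≠ Measure.dirac (2 / 3)) (hx : x ∈ simplex2) :
    ∀ᵐ ω ∂P, ∃ p ∈ fixedA, Tendsto (fun n => phiRDS (fun k => Θ k ω) n x) atTop (𝓝 p) := by
  have : IsProbabilityMeasure ν := hlaw 0 ▸ Measure.isProbabilityMeasure_map (hΘ 0).aemeasurable
  obtain ⟨i, k, hik, hmax, hmin⟩ := exists_ne_forall_le_forall_ge (x ·)
  obtain ⟨δ, hδ, hνδ⟩ := exists_measure_le_dist_ne_zero_of_ne_dirac hν
  filter_upwards [ae_frequently_mem_of_iIndepFun hΘ hindep hlaw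
      (measurableSet_le measurable_const (by fun_prop)) hνδ,
    ae_exists_tendsto_phiRDS_apply hΘ hΘI hindep hlaw hx (.inl hmax),
    ae_exists_tendsto_phiRDS_apply hΘ hΘI hindep hlaw hx (.inr hmin)] with ω hfreq ⟨a, ha⟩ ⟨b, hb⟩
  have hθ : ∀ n, Θ n ω ∈ Set.Icc 0 1 := fun n => hΘI n ω
  obtain ⟨p, hp⟩ := exists_tendsto_of_tendsto_apply_of_ne (phiRDS_mem_simplex2 hθ hx) hik ha hb
  refine ⟨p, mem_fixedA_of_tendsto_phiRDS hθ hx (mul_pos three_pos hδ) (hfreq.mono fun n hn => ?_)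
    hp, hp⟩
  rw [Real.dist_eq] at hn
  rw [show 3 * Θ n ω - 2 = 3 * (Θ n ω - 2 / 3) by ring, abs_mul, abs_of_pos three_pos]
  gcongr

end RandomOrbit

/-- Theorem 2.1: almost surely, every trajectory of the RDS converges to one of the seven
fixed points in 𝒜. -/
theorem convergence_to_fixed_points (μ : Measure ℝ) [IsProbabilityMeasure μ] (hμ1 : μ (Set.Icc 0 1) = 1)
    (hμ : μ ≠ Measure.dirac (2/3 : ℝ))
    {Ω : Type*} [MeasurableSpace Ω] (P : Measure Ω) [IsProbabilityMeasure P]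
    (Θ : ℕ → Ω → ℝ) (hmeas : ∀ n, Measurable (Θ n))
    (hindep : iIndepFun Θ P)
    (hlaw : ∀ n, Measure.map (Θ n) P = μ)
    (x : EuclideanSpace ℝ (Fin 3)) (hx : x ∈ simplex2) :
    ∀ᵐ ω ∂P, ∃ p ∈ fixedA,
      Tendsto (fun n => phiRDS (fun k => Θ k ω) n x) atTop (𝓝 p) := by
  -- Clamping changes `Θ` only on a null set, but keeps every parameter in `[0, 1]`.
  set clamp : ℝ → ℝ := fun t => Set.projIcc (0 : ℝ) 1 zero_le_one t
  have hclamp : Measurable clamp := (continuous_subtype_val.comp continuous_projIcc).measurable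
  have hclamp_ae : clamp =ᵐ[μ] id := by
    filter_upwards [(mem_ae_iff_prob_eq_one measurableSet_Icc).2 hμ1] with t ht
    exact congrArg Subtype.val (Set.projIcc_of_mem _ ht)
  have hlaw' : ∀ n, P.map (clamp ∘ Θ n) = μ := fun n => by
    rw [← Measure.map_map hclamp (hmeas n), hlaw n, Measure.map_congr hclamp_ae, Measure.map_id]
  have hsame : ∀ᵐ ω ∂P, ∀ n, clamp (Θ n ω) = Θ n ω := ae_all_iff.2 fun n =>
    ae_of_ae_map (hmeas n).aemeasurable (hlaw n ▸ hclamp_ae)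
  filter_upwards [ae_exists_mem_fixedA_tendsto_phiRDS (fun n => hclamp.comp (hmeas n))
    (fun n ω => Subtype.prop _) (hindep.comp _ fun _ => hclamp) hlaw' hμ hx, hsame]
    with ω hω hsame
  simpa only [Function.comp_apply, hsame] using hω
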